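/- arXiv:2310.18637 — 2 statements merged into one kernel-verified Lean document; each statement's English description precedes it below -/
import Mathlib

section
/- The Poisson distribution is determined by its moments: if a Borel probability measure ν on ℝ has the same moments of all orders as the Poisson distribution with parameter λ, then ν equals that Poisson distribution. -/
/-!
Since `cosh (t * x) = ∑ (t * x) ^ (2 * k) / (2 * k)!` has nonnegative terms, monotone convergence
computes `∫ cosh (t * x) ∂ν` from the even moments of `ν` alone. Hence `ν` inherits from the
Poisson law finite exponential moments of every order. Both moment generating functions are then
analytic on all of `ℝ` with the moments as Taylor coefficients at `0`, so they agree, and a law on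
`ℝ` whose moment generating function is finite everywhere is determined by it.
-/

open MeasureTheory ProbabilityTheory Real
open scoped NNReal Nat

lemma lintegral_ofReal_cosh_mul (ρ : Measure ℝ) (t : ℝ) :
    ∫⁻ x, ENNReal.ofReal (cosh (t * x)) ∂ρ
      = ∑' k, ENNReal.ofReal (t ^ (2 * k) / (2 * k)!) * ∫⁻ x, ENNReal.ofReal (x ^ (2 * k)) ∂ρ := by
  have hterm (x : ℝ) (k : ℕ) : ENNReal.ofReal ((t * x) ^ (2 * k) / (2 * k)!)
      = ENNReal.ofReal (t ^ (2 * k) / (2 * k)!) * ENNReal.ofReal (x ^ (2 * k)) := by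
    rw [← ENNReal.ofReal_mul (div_nonneg ((even_two_mul k).pow_nonneg t) (by positivity)),
      mul_pow, mul_div_right_comm]
  calc ∫⁻ x, ENNReal.ofReal (cosh (t * x)) ∂ρ
      = ∫⁻ x, ∑' k, ENNReal.ofReal ((t * x) ^ (2 * k) / (2 * k)!) ∂ρ := by
        refine lintegral_congr fun x => ?_
        rw [← (hasSum_cosh (t * x)).tsum_eq, ENNReal.ofReal_tsum_of_nonneg
          (fun k => div_nonneg ((even_two_mul k).pow_nonneg _) (by positivity))
          (hasSum_cosh (t * x)).summable]
    _ = ∑' k, ENNReal.ofReal (t ^ (2 * k) / (2 * k)!) * ∫⁻ x, ENNReal.ofReal (x ^ (2 * k)) ∂ρ := by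
        simp_rw [hterm]
        rw [lintegral_tsum fun k => by fun_prop]
        exact tsum_congr fun k => lintegral_const_mul _ (by fun_prop)

lemma integrable_exp_mul_of_even_moments_eq {μ ν : Measure ℝ}
    (hμ : ∀ t, Integrable (fun x => exp (t * x)) μ)
    (hν : ∀ k, Integrable (fun x => x ^ (2 * k)) ν)
    (h : ∀ k, ∫ x, x ^ (2 * k) ∂ν = ∫ x, x ^ (2 * k) ∂μ) (t : ℝ) :
    Integrable (fun x => exp (t * x)) ν := by
  have hμ_cosh : Integrable (fun x => cosh (t * x)) μ := by
    simp_rw [cosh_eq, ← neg_mul]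
    exact ((hμ t).add (hμ (-t))).div_const 2
  have hμ_even (k : ℕ) : Integrable (fun x => x ^ (2 * k)) μ :=
    integrable_pow_of_integrable_exp_mul (X := fun x => x) one_ne_zero (hμ 1) (hμ (-1)) _
  have hlintegral_eq : ∫⁻ x, ENNReal.ofReal (cosh (t * x)) ∂ν
      = ∫⁻ x, ENNReal.ofReal (cosh (t * x)) ∂μ := by
    simp_rw [lintegral_ofReal_cosh_mul]
    refine tsum_congr fun k => ?_
    have hpos : ∀ x : ℝ, 0 ≤ x ^ (2 * k) := (even_two_mul k).pow_nonneg
    rw [← ofReal_integral_eq_lintegral_ofReal (hν k) (ae_of_all _ hpos),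
      ← ofReal_integral_eq_lintegral_ofReal (hμ_even k) (ae_of_all _ hpos), h]
  have hν_cosh : Integrable (fun x => cosh (t * x)) ν := by
    refine ⟨by fun_prop, ?_⟩
    rw [hasFiniteIntegral_iff_ofReal (ae_of_all _ fun x => (cosh_pos _).le), hlintegral_eq]
    exact hμ_cosh.lintegral_lt_top
  refine (hν_cosh.const_mul 2).mono' (by fun_prop) (ae_of_all _ fun x => ?_)
  rw [norm_of_nonneg (exp_pos _).le, cosh_eq]
  linarith [exp_pos (-(t * x))]

lemma integrableExpSet_id_eq_univ {ρ : Measure ℝ}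
    (hρ : ∀ t, Integrable (fun x => exp (t * x)) ρ) :
    integrableExpSet id ρ = Set.univ :=
  Set.eq_univ_of_forall hρ

lemma hasFPowerSeriesAt_mgf_id_zero {ρ : Measure ℝ}
    (hρ : ∀ t, Integrable (fun x => exp (t * x)) ρ) :
    HasFPowerSeriesAt (mgf id ρ)
      (FormalMultilinearSeries.ofScalars ℝ fun n => (∫ x, x ^ n ∂ρ) / n !) 0 := by
  simpa using hasFPowerSeriesAt_mgf (X := id) (μ := ρ) (v := 0)
    (by simp [integrableExpSet_id_eq_univ hρ])

lemma analyticOnNhd_mgf_id_univ {ρ : Measure ℝ}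
    (hρ : ∀ t, Integrable (fun x => exp (t * x)) ρ) :
    AnalyticOnNhd ℝ (mgf id ρ) Set.univ := by
  simpa [integrableExpSet_id_eq_univ hρ] using analyticOnNhd_mgf (X := id) (μ := ρ)

lemma mgf_id_eq_of_moments_eq {μ ν : Measure ℝ}
    (hμ : ∀ t, Integrable (fun x => exp (t * x)) μ)
    (hν : ∀ t, Integrable (fun x => exp (t * x)) ν)
    (h : ∀ k, ∫ x, x ^ k ∂ν = ∫ x, x ^ k ∂μ) :
    mgf id ν = mgf id μ := by
  refine (analyticOnNhd_mgf_id_univ hν).eq_of_eventuallyEq (analyticOnNhd_mgf_id_univ hμ)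
    (z₀ := 0) ?_
  have hν_series := hasFPowerSeriesAt_mgf_id_zero hν
  simp_rw [h] at hν_series
  filter_upwards [hν_series.eventually_hasSum_sub,
    (hasFPowerSeriesAt_mgf_id_zero hμ).eventually_hasSum_sub] with t hνt hμt
  exact hνt.unique hμt

theorem eq_of_moments_eq_of_integrable_exp_mul {μ ν : Measure ℝ} [IsFiniteMeasure μ]
    [IsProbabilityMeasure ν] (hμ : ∀ t, Integrable (fun x => exp (t * x)) μ)
    (hν : ∀ k, Integrable (fun x => x ^ k) ν) (h : ∀ k, ∫ x, x ^ k ∂ν = ∫ x, x ^ k ∂μ) :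
    ν = μ := by
  have hν_exp := integrable_exp_mul_of_even_moments_eq hμ (fun k => hν (2 * k)) (fun k => h (2 * k))
  refine Measure.ext_of_complexMGF_id_eq (funext fun z => ?_)
  exact eqOn_complexMGF_of_mgf (mgf_id_eq_of_moments_eq hμ hν_exp h)
    (by simp [integrableExpSet_id_eq_univ hν_exp])

lemma integrable_exp_mul_map_cast_poissonMeasure (r : ℝ≥0) (t : ℝ) :
    Integrable (fun x => exp (t * x)) ((poissonMeasure r).map (Nat.cast : ℕ → ℝ)) := by
  rw [integrable_map_measure (by fun_prop) .of_discrete, integrable_poissonMeasure_iff]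
  refine ((summable_pow_div_factorial (r * exp t)).mul_left (exp (-r))).congr fun n => ?_
  simp only [Function.comp_apply, norm_of_nonneg (exp_pos _).le, mul_pow, ← exp_nat_mul]
  ring_nf

theorem stmt_9_general (lam : ℝ≥0)
    (ν : Measure ℝ) [IsProbabilityMeasure ν]
    (hνint : ∀ k : ℕ, Integrable (fun x => x ^ k) ν)
    (hmom : ∀ k : ℕ, ∫ x, x ^ k ∂ν
      = ∫ x, x ^ k ∂((poissonMeasure lam).map (Nat.cast : ℕ → ℝ))) :
    ν = (poissonMeasure lam).map (Nat.cast : ℕ → ℝ) :=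
  eq_of_moments_eq_of_integrable_exp_mul (integrable_exp_mul_map_cast_poissonMeasure lam) hνint hmom

/-- The Poisson distribution is determined by its moments: if a Borel probability measure
`ν` on `ℝ` has the same moments of all orders as the Poisson distribution with parameter
`λ` (viewed as a measure on `ℝ` via `ℕ ⊆ ℝ`), then `ν` equals that Poisson distribution. -/
theorem stmt_9 (lam : ℝ≥0) (hlam : 0 < lam)
    (ν : Measure ℝ) [IsProbabilityMeasure ν]
    (hνint : ∀ k : ℕ, Integrable (fun x => x ^ k) ν)
    (hmom : ∀ k : ℕ, ∫ x, x ^ k ∂ν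
      = ∫ x, x ^ k ∂((poissonMeasure lam).map (Nat.cast : ℕ → ℝ))) :
    ν = (poissonMeasure lam).map (Nat.cast : ℕ → ℝ) :=
  stmt_9_general lam ν hνint hmom
end

section
/- If μ₁, ..., μ_m are Borel probability measures on ℝ, each determined by its moments, then the product measure μ₁ × ⋯ × μ_m on ℝ^m is determined by its mixed moments: any Borel probability measure ν on ℝ^m with ∫ x₁^{r₁}⋯x_m^{r_m} dν = ∏ᵢ ∫ x^{rᵢ} dμᵢ for all r₁,...,r_m ∈ ℕ equals μ₁ × ⋯ × μ_m. -/
/-!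
Induct on the number of coordinates. For a measurable `A ⊆ ℝ` and a monomial `g` in
`x₂, …, x_m`, the finite measure `(1 + σ g)² ν` pushed forward by `x₁` has moments
proportional to those of `μ₁`, so by determinacy of `μ₁` it is a multiple of `μ₁`; comparing
`σ = 1` and `σ = -1` shows that `∫_{x₁ ∈ A} g dν` factorizes. Hence the restriction of `ν` to
`{x₁ ∈ A}`, projected to `(x₂, …, x_m)`, has the mixed moments of `μ₁(A) · (μ₂ × ⋯ × μ_m)`,
and the induction hypothesis identifies it, which pins down `ν` on boxes.
-/

open MeasureTheory

def IsDeterminedByMoments (μ : Measure ℝ) : Prop :=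
  ∀ ρ : Measure ℝ, IsProbabilityMeasure ρ → (∀ k : ℕ, Integrable (fun x => x ^ k) ρ) →
    (∀ k : ℕ, ∫ x, x ^ k ∂ρ = ∫ x, x ^ k ∂μ) → ρ = μ

theorem IsDeterminedByMoments.eq_smul {μ : Measure ℝ} [IsProbabilityMeasure μ]
    (hμ : IsDeterminedByMoments μ) {ρ : Measure ℝ} {a : ℝ}
    (hint : ∀ k : ℕ, Integrable (fun x => x ^ k) ρ)
    (hmom : ∀ k : ℕ, ∫ x, x ^ k ∂ρ = a * ∫ x, x ^ k ∂μ) :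
    ρ = ENNReal.ofReal a • μ := by
  have : IsFiniteMeasure ρ :=
    (integrable_const_iff_isFiniteMeasure one_ne_zero).1 (by simpa using hint 0)
  have hmass : ρ.real Set.univ = a := by simpa using hmom 0
  rcases eq_zero_or_neZero ρ with rfl | hρ
  · simp [← hmass]
  have ha : 0 < a := hmass ▸ measureReal_univ_pos
  have hnorm := hμ _ isProbabilityMeasureSMul
    (fun k => (hint k).smul_measure (by simp [hρ.out])) fun k => by
      rw [integral_smul_measure, hmom k, ENNReal.toReal_inv, ← measureReal_def, hmass, smul_eq_mul,
        inv_mul_cancel_left₀ ha.ne']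
  rw [← hnorm, smul_smul, ← ofReal_measureReal, hmass,
    ENNReal.mul_inv_cancel (ENNReal.ofReal_pos.2 ha).ne' ENNReal.ofReal_ne_top, one_smul]

theorem IsDeterminedByMoments.setIntegral_preimage {μ : Measure ℝ} [IsProbabilityMeasure μ]
    (hμ : IsDeterminedByMoments μ) {X : Type*} [MeasurableSpace X] {ν : Measure X} {π : X → ℝ}
    (hπ : Measurable π) {h : X → ℝ} (hh : Measurable h) (h_nonneg : 0 ≤ h) {a : ℝ}
    (hint : ∀ k : ℕ, Integrable (fun x => π x ^ k * h x) ν)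
    (hmom : ∀ k : ℕ, ∫ x, π x ^ k * h x ∂ν = a * ∫ x, x ^ k ∂μ)
    {A : Set ℝ} (hA : MeasurableSet A) :
    ∫ x in π ⁻¹' A, h x ∂ν = a * μ.real A := by
  have hd : Measurable fun x => ENNReal.ofReal (h x) := hh.ennreal_ofReal
  have hd_lt : ∀ᵐ x ∂ν, ENNReal.ofReal (h x) < ⊤ := .of_forall fun _ => ENNReal.ofReal_lt_top
  have hdens : ∀ (k : ℕ) x, (ENNReal.ofReal (h x)).toReal • π x ^ k = π x ^ k * h x :=
    fun k x => by rw [ENNReal.toReal_ofReal (h_nonneg x), smul_eq_mul, mul_comm]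
  have hpow : ∀ k : ℕ, Measurable fun t : ℝ => t ^ k := fun k => by fun_prop
  set ρ := (ν.withDensity fun x => ENNReal.ofReal (h x)).map π
  have hρ : ρ = ENNReal.ofReal a • μ := by
    refine hμ.eq_smul (fun k => ?_) fun k => ?_
    · rw [integrable_map_measure (hpow k).aestronglyMeasurable hπ.aemeasurable,
        integrable_withDensity_iff_integrable_smul' hd hd_lt]
      simpa only [Function.comp_apply, hdens] using hint k
    · rw [integral_map hπ.aemeasurable (hpow k).aestronglyMeasurable,
        integral_withDensity_eq_integral_toReal_smul hd hd_lt]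
      simpa only [hdens] using hmom k
  have hA' : ρ A = ENNReal.ofReal (∫ x in π ⁻¹' A, h x ∂ν) := by
    rw [Measure.map_apply hπ hA, withDensity_apply _ (hπ hA),
      ofReal_integral_eq_lintegral_ofReal (by simpa using (hint 0).restrict) (.of_forall h_nonneg)]
  have ha : 0 ≤ a := by
    have hmass := hmom 0
    simp only [pow_zero, one_mul, integral_const, probReal_univ, smul_eq_mul, mul_one] at hmass
    exact hmass ▸ integral_nonneg h_nonneg
  rw [← ENNReal.toReal_ofReal (setIntegral_nonneg (hπ hA) fun x _ => h_nonneg x), ← hA', hρ,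
    Measure.smul_apply, smul_eq_mul, ENNReal.toReal_mul, ENNReal.toReal_ofReal ha, measureReal_def]

theorem MeasureTheory.Measure.eq_smul_pi_of_forall_pi_univ {ι : Type*} [Fintype ι] {α : ι → Type*}
    [∀ i, MeasurableSpace (α i)] {μ : ∀ i, Measure (α i)} [∀ i, IsFiniteMeasure (μ i)]
    {ν : Measure (∀ i, α i)} {a : ENNReal} (ha : a ≠ ⊤)
    (h : ∀ t : ∀ i, Set (α i), (∀ i, MeasurableSet (t i)) →
      ν (Set.univ.pi t) = a * ∏ i, μ i (t i)) :
    ν = a • Measure.pi μ := by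
  have : IsFiniteMeasure (a • Measure.pi μ) := (Measure.pi μ).smul_finite ha
  have hbox : ∀ t : ∀ i, Set (α i), (∀ i, MeasurableSet (t i)) →
      (a • Measure.pi μ) (Set.univ.pi t) = ν (Set.univ.pi t) := fun t ht => by
    rw [h t ht, Measure.smul_apply, Measure.pi_pi, smul_eq_mul]
  refine (ext_of_generate_finite _ generateFrom_pi.symm isPiSystem_pi ?_ ?_).symm
  · rintro _ ⟨t, ht, rfl⟩
    exact hbox t fun i => ht i (Set.mem_univ i)
  · simpa using hbox (fun _ => Set.univ) fun _ => MeasurableSet.univ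

theorem integral_mul_one_add_mul_sq {X : Type*} [MeasurableSpace X] {ν : Measure X}
    {F g : X → ℝ}
    (hint : ∀ j ≤ 2, Integrable (fun x => F x * g x ^ j) ν) (σ : ℝ) :
    Integrable (fun x => F x * (1 + σ * g x) ^ 2) ν ∧
      ∫ x, F x * (1 + σ * g x) ^ 2 ∂ν = ∫ x, F x * g x ^ 0 ∂ν + 2 * σ * ∫ x, F x * g x ^ 1 ∂ν
        + σ ^ 2 * ∫ x, F x * g x ^ 2 ∂ν := by
  have hexp : (fun x => F x * (1 + σ * g x) ^ 2) =
      fun x => F x * g x ^ 0 + 2 * σ * (F x * g x ^ 1) + σ ^ 2 * (F x * g x ^ 2) := by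
    ext x; ring
  have h0 := hint 0 (by norm_num)
  have h1 := (hint 1 (by norm_num)).const_mul (2 * σ)
  have h2 := (hint 2 le_rfl).const_mul (σ ^ 2)
  refine ⟨hexp ▸ (h0.add h1).add h2, ?_⟩
  rw [hexp, integral_add (f := fun x => F x * g x ^ 0 + 2 * σ * (F x * g x ^ 1)) (h0.add h1) h2,
    integral_add h0 h1, integral_const_mul, integral_const_mul]

theorem prod_pow_cons {m : ℕ} (x : Fin (m + 1) → ℝ) (k : ℕ) (s : Fin m → ℕ) :
    ∏ i, x i ^ (Fin.cons k s : Fin (m + 1) → ℕ) i = x 0 ^ k * ∏ i, Fin.tail x i ^ s i := by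
  simp [Fin.prod_univ_succ, Fin.tail]

theorem tail_prod_pow_pow {m : ℕ} (x : Fin (m + 1) → ℝ) (s : Fin m → ℕ) (j : ℕ) :
    (∏ i, Fin.tail x i ^ s i) ^ j = ∏ i, Fin.tail x i ^ (j * s i) := by
  simp [← Finset.prod_pow, ← pow_mul, mul_comm]

section TailMoments

variable {m : ℕ} {μ : Fin (m + 1) → Measure ℝ} {ν : Measure (Fin (m + 1) → ℝ)} {c : ℝ}
  (hνint : ∀ s : Fin (m + 1) → ℕ, Integrable (fun x => ∏ i, x i ^ s i) ν)
  (hmom : ∀ s : Fin (m + 1) → ℕ, ∫ x, ∏ i, x i ^ s i ∂ν = c * ∏ i, ∫ x, x ^ s i ∂(μ i))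

include hνint in
theorem integrable_pow_mul_tail_prod_pow_pow (k : ℕ) (s : Fin m → ℕ) (j : ℕ) :
    Integrable (fun x => x 0 ^ k * (∏ i, Fin.tail x i ^ s i) ^ j) ν := by
  simpa only [tail_prod_pow_pow, prod_pow_cons] using hνint (Fin.cons k fun i => j * s i)

include hmom in
theorem integral_pow_mul_tail_prod_pow_pow (k : ℕ) (s : Fin m → ℕ) (j : ℕ) :
    ∫ x, x 0 ^ k * (∏ i, Fin.tail x i ^ s i) ^ j ∂ν
      = c * (∏ i, ∫ x, x ^ (j * s i) ∂(μ i.succ)) * ∫ x, x ^ k ∂(μ 0) := by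
  simp only [tail_prod_pow_pow, ← prod_pow_cons]
  rw [hmom, Fin.prod_univ_succ]
  simp only [Fin.cons_zero, Fin.cons_succ]
  ring

include hνint hmom in
theorem setIntegral_tail_prod_pow [IsProbabilityMeasure (μ 0)]
    (hdet : IsDeterminedByMoments (μ 0))
    {A : Set ℝ} (hA : MeasurableSet A) (s : Fin m → ℕ) :
    ∫ x in (fun x => x 0) ⁻¹' A, ∏ i, Fin.tail x i ^ s i ∂ν
      = c * (μ 0).real A * ∏ i, ∫ x, x ^ s i ∂(μ i.succ) := by
  set g : (Fin (m + 1) → ℝ) → ℝ := fun x => ∏ i, Fin.tail x i ^ s i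
  have hg : Measurable g :=
    Finset.measurable_prod _ fun i _ => (measurable_pi_apply _).pow_const _
  set C : ℕ → ℝ := fun j => ∏ i, ∫ x, x ^ (j * s i) ∂(μ i.succ)
  have hsq (σ : ℝ) : ∫ x in (fun x => x 0) ⁻¹' A, (1 + σ * g x) ^ 2 ∂ν
      = c * (C 0 + 2 * σ * C 1 + σ ^ 2 * C 2) * (μ 0).real A := by
    have hexp (k : ℕ) := integral_mul_one_add_mul_sq (ν := ν) (F := fun x => x 0 ^ k) (g := g)
      (fun j _ => integrable_pow_mul_tail_prod_pow_pow hνint k s j) σ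
    refine hdet.setIntegral_preimage (measurable_pi_apply 0)
      ((hg.const_mul σ).const_add 1 |>.pow_const 2) (fun x => sq_nonneg _)
      (fun k => (hexp k).1) (fun k => ?_) hA
    simp only [(hexp k).2, g, C, integral_pow_mul_tail_prod_pow_pow hmom]
    ring
  have hquad (σ : ℝ) : c * (C 0 + 2 * σ * C 1 + σ ^ 2 * C 2) * (μ 0).real A
      = ∫ x in (fun x => x 0) ⁻¹' A, g x ^ 0 ∂ν + 2 * σ * ∫ x in (fun x => x 0) ⁻¹' A, g x ∂ν
        + σ ^ 2 * ∫ x in (fun x => x 0) ⁻¹' A, g x ^ 2 ∂ν := by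
    have hexp := integral_mul_one_add_mul_sq (ν := ν.restrict ((fun x => x 0) ⁻¹' A))
      (F := fun _ => 1) (g := g) (fun j _ => by
        simpa using (integrable_pow_mul_tail_prod_pow_pow hνint 0 s j).restrict) σ
    simp only [one_mul, pow_one] at hexp
    rw [← hsq, hexp.2]
  have hC1 : C 1 = ∏ i, ∫ x, x ^ s i ∂(μ i.succ) := by simp only [C, one_mul]
  rw [← hC1]
  linear_combination (hquad (-1) - hquad 1) / 4

end TailMoments

theorem eq_smul_pi_of_integral_prod_pow {m : ℕ} (μ : Fin m → Measure ℝ)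
    [∀ i, IsProbabilityMeasure (μ i)] (hdet : ∀ i, IsDeterminedByMoments (μ i))
    {ν : Measure (Fin m → ℝ)} {c : ℝ}
    (hνint : ∀ s : Fin m → ℕ, Integrable (fun x => ∏ i, x i ^ s i) ν)
    (hmom : ∀ s : Fin m → ℕ, ∫ x, ∏ i, x i ^ s i ∂ν = c * ∏ i, ∫ x, x ^ s i ∂(μ i)) :
    ν = ENNReal.ofReal c • Measure.pi μ := by
  induction m generalizing c with
  | zero =>
    have : IsFiniteMeasure ν :=
      (integrable_const_iff_isFiniteMeasure one_ne_zero).1 (by simpa using hνint 0)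
    have hmass : ν.real Set.univ = c := by simpa using hmom 0
    refine Measure.eq_smul_pi_of_forall_pi_univ ENNReal.ofReal_ne_top fun t _ => ?_
    rw [show Set.univ.pi t = Set.univ from Set.eq_univ_of_forall fun _ i _ => i.elim0]
    simp [← hmass]
  | succ m ih =>
    refine Measure.eq_smul_pi_of_forall_pi_univ ENNReal.ofReal_ne_top fun t ht => ?_
    have htail : Measurable (Fin.tail : (Fin (m + 1) → ℝ) → Fin m → ℝ) := by fun_prop
    have hmono (s : Fin m → ℕ) : Measurable fun y : Fin m → ℝ => ∏ i, y i ^ s i := by fun_prop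
    have hbox : Set.univ.pi t
        = Fin.tail ⁻¹' Set.univ.pi (fun i : Fin m => t i.succ) ∩ (fun x => x 0) ⁻¹' t 0 := by
      ext x
      simp [Fin.forall_fin_succ, Fin.tail, and_comm]
    have hB : MeasurableSet (Set.univ.pi fun i : Fin m => t i.succ) :=
      .univ_pi fun i => ht i.succ
    have hslice : (ν.restrict ((fun x => x 0) ⁻¹' t 0)).map Fin.tail
        = ENNReal.ofReal (c * (μ 0).real (t 0)) • Measure.pi fun i => μ i.succ := by
      refine ih (fun i => μ i.succ) (fun i => hdet i.succ) (fun s => ?_) fun s => ?_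
      · rw [integrable_map_measure (hmono s).aestronglyMeasurable htail.aemeasurable]
        simpa [Function.comp_def] using
          (integrable_pow_mul_tail_prod_pow_pow hνint 0 s 1).restrict
      · rw [integral_map htail.aemeasurable (hmono s).aestronglyMeasurable]
        exact setIntegral_tail_prod_pow hνint hmom (hdet 0) (ht 0) s
    rw [hbox, ← Measure.restrict_apply (htail hB), ← Measure.map_apply htail hB, hslice,
      Measure.smul_apply, Measure.pi_pi, Fin.prod_univ_succ,
      ENNReal.ofReal_mul' measureReal_nonneg, ofReal_measureReal, smul_eq_mul, mul_assoc]

theorem stmt_10_general {m : ℕ} (μ : Fin m → Measure ℝ) [∀ i, IsProbabilityMeasure (μ i)]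
    (hdet : ∀ (i : Fin m) (ρ : Measure ℝ), IsProbabilityMeasure ρ →
      (∀ k : ℕ, Integrable (fun x => x ^ k) ρ) →
      (∀ k : ℕ, ∫ x, x ^ k ∂ρ = ∫ x, x ^ k ∂(μ i)) → ρ = μ i)
    (ν : Measure (Fin m → ℝ))
    (hνint : ∀ s : Fin m → ℕ, Integrable (fun x => ∏ i, x i ^ s i) ν)
    (hmom : ∀ s : Fin m → ℕ,
      ∫ x, ∏ i, x i ^ s i ∂ν = ∏ i, ∫ x, x ^ s i ∂(μ i)) :
    ν = Measure.pi μ := by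
  simpa using eq_smul_pi_of_integral_prod_pow μ hdet (c := 1) hνint (by simpa using hmom)

/-- If `μ₁, ..., μ_m` are Borel probability measures on `ℝ`, each determined by its
moments, then the product measure on `ℝ^m` is determined by its mixed moments. -/
theorem stmt_10 {m : ℕ} (μ : Fin m → Measure ℝ) [∀ i, IsProbabilityMeasure (μ i)]
    (hint : ∀ (i : Fin m) (k : ℕ), Integrable (fun x => x ^ k) (μ i))
    (hdet : ∀ (i : Fin m) (ρ : Measure ℝ), IsProbabilityMeasure ρ →
      (∀ k : ℕ, Integrable (fun x => x ^ k) ρ) →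
      (∀ k : ℕ, ∫ x, x ^ k ∂ρ = ∫ x, x ^ k ∂(μ i)) → ρ = μ i)
    (ν : Measure (Fin m → ℝ)) [IsProbabilityMeasure ν]
    (hνint : ∀ s : Fin m → ℕ, Integrable (fun x => ∏ i, x i ^ s i) ν)
    (hmom : ∀ s : Fin m → ℕ,
      ∫ x, ∏ i, x i ^ s i ∂ν = ∏ i, ∫ x, x ^ s i ∂(μ i)) :
    ν = Measure.pi μ :=
  stmt_10_general μ hdet ν hνint hmom
end
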